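/- For the Lie algebra g = s_{6,228}^{-β,β,γ,-γ} with 0 ≤ β ≤ γ, 0 < γ, and structure equations (-β e^{15} + γ e^{16} + e^{25}, -e^{15} - β e^{25} + γ e^{26}, β e^{35} - γ e^{36} + e^{46}, -e^{36} + β e^{45} - γ e^{46}, 0, 0), the endomorphism J with J e1 = e2, J e3 = e4, J e5 = e6 (and J² = -Id) is integrable (N_J ≡ 0), and its Koszul 1-form ψ(x) = Tr(J∘ad x) - Tr(ad(Jx)) satisfies ψ = ±2 e^5 ± 2 e^6; in particular ψ vanishes on [g,g] = span{e1,e2,e3,e4}. -/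
import Mathlib


namespace Stmt17

abbrev V : Type := Fin 6 → ℝ

/-- standard basis -/
noncomputable def e (i : Fin 6) : V := Pi.single i 1

/-- the Lie bracket (depending on the real parameters) -/
def br (β γ : ℝ) (x y : V) : V := fun k =>
  match k with
  | 0 => β * (x 0 * y 4 - x 4 * y 0) - (x 1 * y 4 - x 4 * y 1) - γ * (x 0 * y 5 - x 5 * y 0)
  | 1 => (x 0 * y 4 - x 4 * y 0) + β * (x 1 * y 4 - x 4 * y 1) - γ * (x 1 * y 5 - x 5 * y 1)
  | 2 => -β * (x 2 * y 4 - x 4 * y 2) + γ * (x 2 * y 5 - x 5 * y 2) - (x 3 * y 5 - x 5 * y 3)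
  | 3 => (x 2 * y 5 - x 5 * y 2) - β * (x 3 * y 4 - x 4 * y 3) + γ * (x 3 * y 5 - x 5 * y 3)
  | 4 => 0
  | 5 => 0

/-- the adjoint operator `ad x = [x, ·]` as a linear endomorphism -/
noncomputable def ad (β γ : ℝ) (x : V) : V →ₗ[ℝ] V where
  toFun := br β γ x
  map_add' := by intro a b; funext k; fin_cases k <;> simp [br] <;> ring
  map_smul' := by intro c a; funext k; fin_cases k <;> simp [br] <;> ring

/-- the Nijenhuis tensor of an endomorphism `J` -/
noncomputable def nijenhuis (β γ : ℝ) (J : V →ₗ[ℝ] V) (x y : V) : V :=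
  br β γ x y + J (br β γ (J x) y + br β γ x (J y)) - br β γ (J x) (J y)

/-- the Koszul 1-form `ψ(x) = Tr(J ∘ ad x) - Tr(ad (J x))` -/
noncomputable def psi (β γ : ℝ) (J : V →ₗ[ℝ] V) (x : V) : ℝ :=
  LinearMap.trace ℝ V (J ∘ₗ ad β γ x) - LinearMap.trace ℝ V (ad β γ (J x))

noncomputable def Jmap : V →ₗ[ℝ] V where
  toFun := fun x k =>
    match k with
    | 0 => -x 1 | 1 => x 0 | 2 => -x 3 | 3 => x 2 | 4 => -x 5 | 5 => x 4
  map_add' := by intro a b; funext k; fin_cases k <;> simp <;> ring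
  map_smul' := by intro c a; funext k; fin_cases k <;> simp <;> ring

lemma Jmap_apply (x : V) (k : Fin 6) : Jmap x k =
    match k with
    | 0 => -x 1 | 1 => x 0 | 2 => -x 3 | 3 => x 2 | 4 => -x 5 | 5 => x 4 := rfl

lemma psi_eq (β γ : ℝ) (x : V) : psi β γ Jmap x = 2 * x 4 + 2 * x 5 := by
  unfold psi
  rw [LinearMap.trace_eq_matrix_trace ℝ (Pi.basisFun ℝ (Fin 6)),
      LinearMap.trace_eq_matrix_trace ℝ (Pi.basisFun ℝ (Fin 6))]
  simp [Matrix.trace, Matrix.diag, LinearMap.toMatrix_apply, Fin.sum_univ_six,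
    ad, Jmap, br, Pi.single]
  ring

/-- on `s_{6,228}^{-β,β,γ,-γ}` (with `0 ≤ β ≤ γ`, `0 < γ`) the structure
`J e1 = e2, J e3 = e4, J e5 = e6` is integrable and its Koszul form is `ψ = 2e^5 + 2e^6`;
in particular `ψ` vanishes on `[g,g] = span{e1,e2,e3,e4}`. -/
theorem stmt_17 (β γ : ℝ) (hβ : 0 ≤ β) (hβγ : β ≤ γ) (hγ : 0 < γ) :
    ∃ J : V →ₗ[ℝ] V,
      J (e 0) = e 1 ∧ J (e 1) = -e 0 ∧ J (e 2) = e 3 ∧ J (e 3) = -e 2 ∧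
      J (e 4) = e 5 ∧ J (e 5) = -e 4 ∧
      (∀ x : V, J (J x) = -x) ∧
      (∀ x y : V, nijenhuis β γ J x y = 0) ∧
      psi β γ J (e 0) = 0 ∧ psi β γ J (e 1) = 0 ∧ psi β γ J (e 2) = 0 ∧
      psi β γ J (e 3) = 0 ∧
      psi β γ J (e 4) = 2 ∧ psi β γ J (e 5) = 2 ∧
      (∀ x y : V, psi β γ J (br β γ x y) = 0) := by
  refine ⟨Jmap, ?_, ?_, ?_, ?_, ?_, ?_, ?_, ?_, ?_, ?_, ?_, ?_, ?_, ?_, ?_⟩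
  · funext k; fin_cases k <;> simp [Jmap_apply, e, Pi.single, Function.update]
  · funext k; fin_cases k <;> simp [Jmap_apply, e, Pi.single, Function.update]
  · funext k; fin_cases k <;> simp [Jmap_apply, e, Pi.single, Function.update]
  · funext k; fin_cases k <;> simp [Jmap_apply, e, Pi.single, Function.update]
  · funext k; fin_cases k <;> simp [Jmap_apply, e, Pi.single, Function.update]
  · funext k; fin_cases k <;> simp [Jmap_apply, e, Pi.single, Function.update]
  · intro x; funext k; fin_cases k <;> simp [Jmap_apply]
  · intro x y; funext k
    fin_cases k <;>
      simp [nijenhuis, Jmap, br] <;> ring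
  · simp [psi_eq, e, Pi.single_apply]
  · simp [psi_eq, e, Pi.single_apply]
  · simp [psi_eq, e, Pi.single_apply]
  · simp [psi_eq, e, Pi.single_apply]
  · norm_num [psi_eq, e, Pi.single_apply]; decide
  · norm_num [psi_eq, e, Pi.single_apply]; decide
  · intro x y; simp [psi_eq, br]


end Stmt17
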